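/- Let X be an m×n Boolean matrix and let I be a finite set of positions (i,j) with X_{i,j}=1 that are pairwise incompatible. Then for every m×k Boolean matrix A and k×n Boolean matrix B such that A∘B undercovers X, the number of positions (i,j) ∈ I with (A∘B)_{i,j}=1 is at most k. -/

import Mathlib

/-- Boolean product of an `m × k` and a `k × n` Boolean matrix:
`(A ∘ B) i j = ⋁ ℓ, A i ℓ ∧ B ℓ j`. -/
def bProd {m k n : ℕ} (A : Fin m → Fin k → Bool) (B : Fin k → Fin n → Bool) :
    Fin m → Fin n → Bool :=
  fun i j => decide (∃ ℓ, A i ℓ = true ∧ B ℓ j = true)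

/-- `D` undercovers `X`: there are no `i, j` with `X i j = 0` and `D i j = 1`. -/
def undercovers {m n : ℕ} (D X : Fin m → Fin n → Bool) : Prop :=
  ∀ i j, X i j = false → D i j = false

/-- `|M|₁`: the number of `1`-entries of the Boolean matrix `M`. -/
def ones {m n : ℕ} (M : Fin m → Fin n → Bool) : ℕ :=
  (Finset.univ.filter fun p : Fin m × Fin n => M p.1 p.2 = true).card

/-!
Each covered position `(i, j)` of `I` is covered by some rank-one factor `ℓ`, i.e. `A i ℓ ∧ B ℓ j`.
Two positions covered by the same factor span a rectangle of ones of `A ∘ B`, hence of `X`, so they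
are compatible; thus distinct positions of `I` use distinct factors, and there are only `k` of them.
-/

theorem bProd_eq_true_iff {m k n : ℕ} {A : Fin m → Fin k → Bool} {B : Fin k → Fin n → Bool}
    {i : Fin m} {j : Fin n} : bProd A B i j = true ↔ ∃ ℓ, A i ℓ = true ∧ B ℓ j = true := by
  simp [bProd]

theorem undercovers.eq_true {m n : ℕ} {D X : Fin m → Fin n → Bool} (h : undercovers D X)
    {i : Fin m} {j : Fin n} (hD : D i j = true) : X i j = true := by
  by_contra hX
  simp [h i j (Bool.eq_false_iff.2 hX)] at hD

theorem undercovers.eq_true_of_factor {m k n : ℕ} {X : Fin m → Fin n → Bool}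
    {A : Fin m → Fin k → Bool} {B : Fin k → Fin n → Bool} (hU : undercovers (bProd A B) X)
    {i : Fin m} {j : Fin n} {ℓ : Fin k} (hA : A i ℓ = true) (hB : B ℓ j = true) :
    X i j = true :=
  hU.eq_true (bProd_eq_true_iff.2 ⟨ℓ, hA, hB⟩)

theorem pairwise_incompatible_covered_le_rank_general {m n k : ℕ} (X : Fin m → Fin n → Bool)
    (I : Finset (Fin m × Fin n))
    (hpair : ∀ p ∈ I, ∀ q ∈ I, p ≠ q → X p.1 q.2 = false ∨ X q.1 p.2 = false)
    (A : Fin m → Fin k → Bool) (B : Fin k → Fin n → Bool)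
    (hU : undercovers (bProd A B) X) :
    (I.filter fun p => bProd A B p.1 p.2 = true).card ≤ k := by
  let coveredBy : Fin m × Fin n → Fin k → Prop := fun p ℓ => A p.1 ℓ = true ∧ B ℓ p.2 = true
  have hcovered : ∀ p ∈ I.filter (fun p => bProd A B p.1 p.2 = true),
      ∃ ℓ, ℓ ∈ Finset.univ ∧ coveredBy p ℓ := by
    intro p hp
    obtain ⟨ℓ, hℓ⟩ := bProd_eq_true_iff.1 (Finset.mem_filter.1 hp).2
    exact ⟨ℓ, Finset.mem_univ ℓ, hℓ⟩
  have hunique : ∀ ℓ ∈ (Finset.univ : Finset (Fin k)),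
      ({p ∈ I.filter (fun p => bProd A B p.1 p.2 = true) | coveredBy p ℓ} : Set _).Subsingleton := by
    rintro ℓ - p ⟨hp, hpA, hpB⟩ q ⟨hq, hqA, hqB⟩
    by_contra hne
    rcases hpair p (Finset.mem_filter.1 hp).1 q (Finset.mem_filter.1 hq).1 hne with h | h
    · simp [hU.eq_true_of_factor hpA hqB] at h
    · simp [hU.eq_true_of_factor hqA hpB] at h
  simpa using Finset.card_le_card_of_forall_subsingleton coveredBy hcovered hunique

theorem pairwise_incompatible_covered_le_rank {m n k : ℕ} (X : Fin m → Fin n → Bool)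
    (I : Finset (Fin m × Fin n))
    (hone : ∀ p ∈ I, X p.1 p.2 = true)
    (hpair : ∀ p ∈ I, ∀ q ∈ I, p ≠ q → X p.1 q.2 = false ∨ X q.1 p.2 = false)
    (A : Fin m → Fin k → Bool) (B : Fin k → Fin n → Bool)
    (hU : undercovers (bProd A B) X) :
    (I.filter fun p => bProd A B p.1 p.2 = true).card ≤ k :=
  pairwise_incompatible_covered_le_rank_general X I hpair A B hU
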